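/- arXiv:1401.7397 — 2 statements merged into one kernel-verified Lean document; each statement's English description precedes it below -/
import Mathlib

section
/- (Euler's decomposition formula) For positive integers m and n, one has ζ(m+1) · ζ(n+1) = Σ_{j=1}^{n+1} C(m+n-j+1, m) · ζ(m+n+2-j, j) + Σ_{j=1}^{m+1} C(m+n-j+1, n) · ζ(m+n+2-j, j). -/
/-!
The identity `1/(xy) = (1/x + 1/y) / (x+y)`, applied repeatedly, decomposes `1/(x^(m+1) y^(n+1))`
into terms `1/(x^j (x+y)^(m+n+2-j))` and `1/(y^j (x+y)^(m+n+2-j))` with binomial coefficients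
(induction on `m` and `n`, Pascal's rule). Summing over all `x, y ≥ 1`, the left side gives
`ζ(m+1) ζ(n+1)` and, via the substitution `(x+y, x) ↦ (n₁, n₂)`, each term on the right gives a
double zeta value. All terms are nonnegative, so the finite sums and the double series commute.
-/

open Finset

/-- The multiple zeta value `ζ(s₁, …, s_k) = ∑_{n₁ > n₂ > ⋯ > n_k ≥ 1} 1/(n₁^{s₁} ⋯ n_k^{s_k})`,
where the exponent string is given as a list. -/
noncomputable def mzv (s : List ℕ) : ℝ :=
  ∑' n : {f : Fin s.length → ℕ //
      (∀ i j : Fin s.length, i < j → f j < f i) ∧ ∀ i, 1 ≤ f i},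
    ∏ i : Fin s.length, ((n.1 i : ℝ) ^ s.get i)⁻¹

section PartialFractions

variable {R : Type*} [CommSemiring R]

-- With `j = p.2 + 1` this is `∑_{j=1}^{m+1} C(m+n+1-j, n) a^j c^(m+n+2-j)`.
noncomputable def eulerSum (a c : R) (m n : ℕ) : R :=
  ∑ p ∈ antidiagonal m, ((p.1 + n).choose n : R) * a ^ (p.2 + 1) * c ^ (p.1 + n + 1)

theorem eulerSum_succ_succ (a c : R) (m n : ℕ) :
    eulerSum a c (m + 1) (n + 1) = c * (eulerSum a c (m + 1) n + eulerSum a c m (n + 1)) := by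
  simp only [eulerSum, Nat.sum_antidiagonal_succ, mul_add, mul_sum]
  rw [add_assoc _ (∑ _ ∈ _, _), ← sum_add_distrib]
  congr 1
  · simp only [zero_add, Nat.choose_self, Nat.cast_one]
    ring
  · refine sum_congr rfl fun p _ => ?_
    rw [show p.1 + 1 + (n + 1) = p.1 + 1 + n + 1 by ring, Nat.choose_succ_succ,
      show p.1 + 1 + n = p.1 + (n + 1) by ring]
    push_cast
    ring

theorem eulerSum_zero_left (a c : R) (n : ℕ) : eulerSum a c 0 n = a * c ^ (n + 1) := by
  simp [eulerSum]

theorem eulerSum_zero_right (a c : R) (m : ℕ) :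
    eulerSum a c m 0 = ∑ p ∈ antidiagonal m, a ^ (p.2 + 1) * c ^ (p.1 + 1) := by
  simp [eulerSum]

variable {a b c : R}

theorem mul_pow_eq_eulerSum_add_eulerSum (h : a * b = c * (a + b)) (n : ℕ) :
    a * b ^ (n + 1) = eulerSum a c 0 n + eulerSum b c n 0 := by
  rw [eulerSum_zero_left, eulerSum_zero_right]
  induction n with
  | zero => simp [h]; ring
  | succ n ih =>
    calc a * b ^ (n + 1 + 1) = c * (a * b ^ (n + 1)) + c * b ^ (n + 1 + 1) := by
          rw [pow_succ' b (n + 1), ← mul_assoc, h]; ring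
      _ = _ := by
          rw [ih, Nat.sum_antidiagonal_succ, mul_add, mul_sum]
          ring_nf

theorem pow_mul_pow_eq_eulerSum_add_eulerSum (h : a * b = c * (a + b)) (m n : ℕ) :
    a ^ (m + 1) * b ^ (n + 1) = eulerSum a c m n + eulerSum b c n m := by
  induction m generalizing n with
  | zero => simpa using mul_pow_eq_eulerSum_add_eulerSum h n
  | succ m ihm =>
    induction n with
    | zero =>
      have h' : b * a = c * (b + a) := by rw [mul_comm, add_comm, h]
      simpa [mul_comm, add_comm] using mul_pow_eq_eulerSum_add_eulerSum h' (m + 1)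
    | succ n ihn =>
      calc a ^ (m + 1 + 1) * b ^ (n + 1 + 1)
          = (a * b) * (a ^ (m + 1) * b ^ (n + 1)) := by ring
        _ = c * (a ^ (m + 1 + 1) * b ^ (n + 1) + a ^ (m + 1) * b ^ (n + 1 + 1)) := by
            rw [h]; ring
        _ = _ := by rw [ihn, ihm, eulerSum_succ_succ, eulerSum_succ_succ]; ring

end PartialFractions

theorem eulerSum_nonneg {R : Type*} [CommSemiring R] [PartialOrder R] [IsOrderedRing R] {a c : R}
    (ha : 0 ≤ a) (hc : 0 ≤ c) (m n : ℕ) : 0 ≤ eulerSum a c m n :=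
  sum_nonneg fun _ _ => by positivity

theorem inv_pow_mul_inv_pow_eq_eulerSum_add_eulerSum {K : Type*} [Field K] {x y : K}
    (hx : x ≠ 0) (hy : y ≠ 0) (hxy : x + y ≠ 0) (m n : ℕ) :
    (x ^ (m + 1))⁻¹ * (y ^ (n + 1))⁻¹ =
      eulerSum x⁻¹ (x + y)⁻¹ m n + eulerSum y⁻¹ (y + x)⁻¹ n m := by
  rw [← inv_pow, ← inv_pow, add_comm y x]
  refine pow_mul_pow_eq_eulerSum_add_eulerSum ?_ m n
  field_simp
  ring

abbrev MzvIndex (k : ℕ) : Type :=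
  {f : Fin k → ℕ // (∀ i j : Fin k, i < j → f j < f i) ∧ ∀ i, 1 ≤ f i}

def MzvIndex.ofPNat : ℕ+ ≃ MzvIndex 1 where
  toFun k := ⟨fun _ => k, by simp, fun _ => k.pos⟩
  invFun f := ⟨f.1 0, f.2.2 0⟩
  left_inv _ := rfl
  right_inv f := by ext i; fin_cases i; rfl

def MzvIndex.ofPNatPair : ℕ+ × ℕ+ ≃ MzvIndex 2 where
  toFun z := ⟨![z.1 + z.2, z.1], by simp [Fin.forall_fin_two],
    by simpa [Fin.forall_fin_two] using ⟨Nat.le_add_right_of_le z.1.pos, z.1.pos⟩⟩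
  invFun f := (⟨f.1 1, f.2.2 1⟩, ⟨f.1 0 - f.1 1, Nat.sub_pos_of_lt (f.2.1 0 1 Fin.zero_lt_one)⟩)
  left_inv z := Prod.ext rfl (PNat.eq (by simp))
  right_inv f := by
    have := f.2.1 0 1 Fin.zero_lt_one
    ext i; fin_cases i <;> simp; omega

theorem mzv_singleton (s : ℕ) : mzv [s] = ∑' k : ℕ+, ((k : ℝ) ^ s)⁻¹ := by
  show ∑' f : MzvIndex 1, _ = _
  rw [← MzvIndex.ofPNat.tsum_eq]
  exact tsum_congr fun _ => Fin.prod_univ_one _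

theorem mzv_pair (p q : ℕ) :
    mzv [p, q] = ∑' z : ℕ+ × ℕ+, (((z.1 : ℝ) + z.2) ^ p)⁻¹ * ((z.1 : ℝ) ^ q)⁻¹ := by
  show ∑' f : MzvIndex 2, _ = _
  rw [← MzvIndex.ofPNatPair.tsum_eq]
  simp [MzvIndex.ofPNatPair, Fin.prod_univ_two, mul_comm]

theorem summable_inv_pow_pnat {s : ℕ} (hs : 1 < s) : Summable fun k : ℕ+ => ((k : ℝ) ^ s)⁻¹ :=
  (Real.summable_nat_pow_inv.mpr hs).comp_injective PNat.coe_injective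

theorem tsum_sum_of_nonneg {ι β : Type*} {s : Finset ι} {f : ι → β → ℝ}
    (hf : ∀ i ∈ s, ∀ b, 0 ≤ f i b) (h : Summable fun b => ∑ i ∈ s, f i b) :
    ∑' b, ∑ i ∈ s, f i b = ∑ i ∈ s, ∑' b, f i b :=
  Summable.tsum_finsetSum fun i hi =>
    h.of_nonneg_of_le (hf i hi) fun b => single_le_sum (fun j hj => hf j hj b) hi

theorem summable_inv_pow_mul_inv_pow {m n : ℕ} (hm : 1 ≤ m) (hn : 1 ≤ n) :
    Summable fun z : ℕ+ × ℕ+ => ((z.1 : ℝ) ^ (m + 1))⁻¹ * ((z.2 : ℝ) ^ (n + 1))⁻¹ :=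
  (summable_inv_pow_pnat (by omega)).mul_of_nonneg (summable_inv_pow_pnat (by omega))
    (fun _ => by positivity) (fun _ => by positivity)

noncomputable def eulerPart (m n : ℕ) (z : ℕ+ × ℕ+) : ℝ :=
  eulerSum (z.1 : ℝ)⁻¹ ((z.1 : ℝ) + z.2)⁻¹ m n

theorem eulerPart_nonneg (m n : ℕ) (z : ℕ+ × ℕ+) : 0 ≤ eulerPart m n z :=
  eulerSum_nonneg (by positivity) (by positivity) m n

theorem inv_pow_mul_inv_pow_eq_eulerPart_add_eulerPart (m n : ℕ) (z : ℕ+ × ℕ+) :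
    ((z.1 : ℝ) ^ (m + 1))⁻¹ * ((z.2 : ℝ) ^ (n + 1))⁻¹ = eulerPart m n z + eulerPart n m z.swap :=
  inv_pow_mul_inv_pow_eq_eulerSum_add_eulerSum (by positivity) (by positivity) (by positivity) m n

theorem summable_eulerPart {m n : ℕ} (hm : 1 ≤ m) (hn : 1 ≤ n) : Summable (eulerPart m n) :=
  (summable_inv_pow_mul_inv_pow hm hn).of_nonneg_of_le (eulerPart_nonneg m n) fun z => by
    rw [inv_pow_mul_inv_pow_eq_eulerPart_add_eulerPart]
    exact le_add_of_nonneg_right (eulerPart_nonneg n m z.swap)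

theorem tsum_eulerPart {m n : ℕ} (h : Summable (eulerPart m n)) :
    ∑' z, eulerPart m n z =
      ∑ p ∈ antidiagonal m, ((p.1 + n).choose n : ℝ) * mzv [p.1 + n + 1, p.2 + 1] := by
  unfold eulerPart eulerSum at h ⊢
  rw [tsum_sum_of_nonneg (fun _ _ _ => by positivity) h]
  refine sum_congr rfl fun p _ => ?_
  rw [mzv_pair, ← tsum_mul_left]
  refine tsum_congr fun z => ?_
  rw [inv_pow, inv_pow]
  ring

theorem sum_antidiagonal_choose_mul_mzv (m n : ℕ) :
    ∑ p ∈ antidiagonal m, ((p.1 + n).choose n : ℝ) * mzv [p.1 + n + 1, p.2 + 1] =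
      ∑ j ∈ Icc 1 (m + 1), ((m + n - j + 1).choose n : ℝ) * mzv [m + n + 2 - j, j] := by
  refine sum_nbij' (fun p => p.2 + 1) (fun j => (m + 1 - j, j - 1)) ?_ ?_ ?_ ?_ ?_ <;>
    simp only [HasAntidiagonal.mem_antidiagonal, mem_Icc, Prod.forall, Prod.mk.injEq]
  · omega
  · omega
  · omega
  · omega
  · intro i j hij
    rw [show m + n + 2 - (j + 1) = i + n + 1 by omega]
    -- for `n = 0` truncated subtraction makes the binomial arguments differ, but both are `C(_, 0)`
    rcases n.eq_zero_or_pos with rfl | hn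
    · simp
    · rw [show m + n - (j + 1) + 1 = i + n by omega]

/-- Euler's decomposition formula. -/
theorem euler_decomposition (m n : ℕ) (hm : 1 ≤ m) (hn : 1 ≤ n) :
    mzv [m + 1] * mzv [n + 1] =
      (∑ j ∈ Finset.Icc 1 (n + 1),
        (Nat.choose (m + n - j + 1) m : ℝ) * mzv [m + n + 2 - j, j])
      + ∑ j ∈ Finset.Icc 1 (m + 1),
        (Nat.choose (m + n - j + 1) n : ℝ) * mzv [m + n + 2 - j, j] := by
  have hmn := summable_eulerPart hm hn
  have hnm := summable_eulerPart hn hm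
  calc mzv [m + 1] * mzv [n + 1]
      = ∑' z : ℕ+ × ℕ+, ((z.1 : ℝ) ^ (m + 1))⁻¹ * ((z.2 : ℝ) ^ (n + 1))⁻¹ := by
        rw [mzv_singleton, mzv_singleton, (summable_inv_pow_pnat (by omega)).tsum_mul_tsum
          (summable_inv_pow_pnat (by omega)) (summable_inv_pow_mul_inv_pow hm hn)]
    _ = ∑' z, eulerPart m n z + ∑' z : ℕ+ × ℕ+, eulerPart n m z.swap := by
        rw [tsum_congr (inv_pow_mul_inv_pow_eq_eulerPart_add_eulerPart m n),
          hmn.tsum_add hnm.prod_symm]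
    _ = ∑' z, eulerPart m n z + ∑' z, eulerPart n m z :=
        congrArg _ ((Equiv.prodComm ℕ+ ℕ+).tsum_eq (eulerPart n m))
    _ = _ := by
        rw [tsum_eulerPart hmn, tsum_eulerPart hnm, sum_antidiagonal_choose_mul_mzv,
          sum_antidiagonal_choose_mul_mzv, add_comm n m, add_comm]
end

section
/- Let a = a₁⋯a_m and b = b₁⋯b_n be words over X with a_i, b_j ∈ X, and fix k with 1 ≤ k ≤ m. Then a ш b = Σ_{i=0}^{n} ((a₁⋯a_{k-1}) ш (b₁⋯b_i)) a_k ((a_{k+1}⋯a_m) ш (b_{i+1}⋯b_n)), where for two multisets of words S, T and a letter x, S x T denotes the multiset of all concatenations u x v with u ∈ S, v ∈ T (counted with multiplicity), and empty ranges of indices denote the empty word. -/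
/-- The shuffle product of two words, as a multiset of words. -/
def shuffle {X : Type*} : List X → List X → Multiset (List X)
  | u, [] => {u}
  | [], v => {v}
  | a :: u, b :: v =>
      (shuffle u (b :: v)).map (a :: ·) + (shuffle (a :: u) v).map (b :: ·)
termination_by u v => u.length + v.length

/-- `S w T`: the multiset of all concatenations `u ++ w ++ v` with `u ∈ S`, `v ∈ T`,
counted with multiplicity. -/
def msConcat {X : Type*} (S : Multiset (List X)) (w : List X) (T : Multiset (List X)) :
    Multiset (List X) :=
  S.bind fun u => T.map fun v => u ++ w ++ v

/-!
Split each shuffle of `u ++ x :: w` with `b` at the position where the letter `x` lands: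
the letters of `b` before it form a prefix `b.take i`, shuffled with `u`, and the rest form
`b.drop i`, shuffled with `w`. Formally, both sides satisfy the recursion defining the shuffle
product on the first letter of `b`, which gives an induction on `u` and, inside, on `b`.
-/

lemma Multiset.map_finset_sum {ι α β : Type*} (s : Finset ι) (g : ι → Multiset α)
    (f : α → β) : (∑ i ∈ s, g i).map f = ∑ i ∈ s, (g i).map f :=
  map_sum (Multiset.mapAddMonoidHom f) g s

section Shuffle

variable {X : Type*}

@[simp]
lemma shuffle_nil_right (u : List X) : shuffle u [] = {u} := by
  cases u <;> rw [shuffle]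

@[simp]
lemma shuffle_nil_left (v : List X) : shuffle [] v = {v} := by
  cases v with
  | nil => rw [shuffle]
  | cons b v => rw [shuffle]; simp

lemma shuffle_cons_cons (a b : X) (u v : List X) :
    shuffle (a :: u) (b :: v) =
      (shuffle u (b :: v)).map (a :: ·) + (shuffle (a :: u) v).map (b :: ·) := by
  rw [shuffle]

@[simp]
lemma msConcat_singleton_left (u w : List X) (T : Multiset (List X)) :
    msConcat {u} w T = T.map (u ++ w ++ ·) := by
  simp [msConcat]

lemma msConcat_add_left (S S' : Multiset (List X)) (w : List X) (T : Multiset (List X)) :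
    msConcat (S + S') w T = msConcat S w T + msConcat S' w T := by
  simp [msConcat, Multiset.add_bind]

lemma map_cons_msConcat (c : X) (S : Multiset (List X)) (w : List X) (T : Multiset (List X)) :
    (msConcat S w T).map (c :: ·) = msConcat (S.map (c :: ·)) w T := by
  simp [msConcat, Multiset.map_bind, Multiset.bind_map]

lemma shuffle_cons_left_eq_sum (x : X) (w b : List X) :
    shuffle (x :: w) b =
      ∑ i ∈ Finset.range (b.length + 1),
        msConcat (shuffle [] (b.take i)) [x] (shuffle w (b.drop i)) := by
  induction b with
  | nil => simp
  | cons y v ih =>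
    rw [shuffle_cons_cons, ih, Multiset.map_finset_sum, List.length_cons,
      Finset.sum_range_succ' _ (v.length + 1), add_comm]
    simp only [List.take_succ_cons, List.drop_succ_cons, List.take_zero, List.drop_zero,
      shuffle_nil_left, map_cons_msConcat, Multiset.map_singleton]
    congr 1
    simp

lemma shuffle_cons_append_cons_eq_sum (c x : X) (u w : List X)
    (ih : ∀ b, shuffle (u ++ x :: w) b =
      ∑ i ∈ Finset.range (b.length + 1),
        msConcat (shuffle u (b.take i)) [x] (shuffle w (b.drop i))) (b : List X) :
    shuffle (c :: u ++ x :: w) b =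
      ∑ i ∈ Finset.range (b.length + 1),
        msConcat (shuffle (c :: u) (b.take i)) [x] (shuffle w (b.drop i)) := by
  induction b with
  | nil => simp
  | cons y v ihb =>
    rw [List.cons_append, shuffle_cons_cons, ← List.cons_append, ih, ihb,
      Multiset.map_finset_sum, Multiset.map_finset_sum, List.length_cons,
      Finset.sum_range_succ', Finset.sum_range_succ' (n := v.length + 1)]
    simp only [List.take_succ_cons, List.drop_succ_cons, List.take_zero, List.drop_zero,
      shuffle_nil_right, shuffle_cons_cons, msConcat_add_left, map_cons_msConcat,
      Multiset.map_singleton, Finset.sum_add_distrib]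
    abel

lemma shuffle_append_cons_eq_sum (u : List X) (x : X) (w b : List X) :
    shuffle (u ++ x :: w) b =
      ∑ i ∈ Finset.range (b.length + 1),
        msConcat (shuffle u (b.take i)) [x] (shuffle w (b.drop i)) := by
  induction u generalizing b with
  | nil => exact shuffle_cons_left_eq_sum x w b
  | cons c u ih => exact shuffle_cons_append_cons_eq_sum c x u w ih b

end Shuffle

theorem shuffle_split_at_letter {X : Type*} (a b : List X) (k : ℕ)
    (hk1 : 1 ≤ k) (hk2 : k ≤ a.length) :
    shuffle a b =
      ∑ i ∈ Finset.range (b.length + 1),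
        msConcat (shuffle (a.take (k - 1)) (b.take i))
          [a.get ⟨k - 1, by omega⟩]
          (shuffle (a.drop k) (b.drop i)) := by
  have hsplit : a = a.take (k - 1) ++ a.get ⟨k - 1, by omega⟩ :: a.drop k := by
    conv_lhs => rw [← List.take_append_drop (k - 1) a]
    rw [List.drop_eq_getElem_cons (by omega), Nat.sub_add_cancel hk1, List.get_eq_getElem]
  conv_lhs => rw [hsplit]
  exact shuffle_append_cons_eq_sum _ _ _ b
end
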